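/- Let Y ∈ ℝ^{d×n} be partitioned into column blocks Y = [Y¹ | ⋯ | Yᴹ], and let Z = [(Y¹)_r | ⋯ | (Yᴹ)_r] where (Yⁱ)_r is a best rank-r Frobenius approximation of Yⁱ. Then ‖Z_r − Y‖_F ≤ ‖Z_r − Z‖_F + ‖Z − Y‖_F ≤ 3 ‖Y_r − Y‖_F, where Z_r and Y_r denote best rank-r approximations of Z and Y respectively. -/

import Mathlib

open Matrix

noncomputable def frob {m n : Type*} [Fintype m] [Fintype n]
    (A : Matrix m n ℝ) : ℝ :=
  Real.sqrt (∑ i, ∑ j, (A i j) ^ 2)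

/-- `B` is a best rank-`r` approximation of `A` in Frobenius norm. -/
def IsBestRankApprox {m n : Type*} [Fintype m] [Fintype n] [DecidableEq m] [DecidableEq n]
    (r : ℕ) (B A : Matrix m n ℝ) : Prop :=
  B.rank ≤ r ∧ ∀ C : Matrix m n ℝ, C.rank ≤ r → frob (B - A) ≤ frob (C - A)

/-- `σ` lists the singular values of `A` in decreasing order: it is antitone,
nonnegative, and the multiset of its squares is the multiset of eigenvalues of
the Gram matrix `Aᴴ A`. -/
def IsSingularValues {m n : Type*} [Fintype m] [Fintype n] [DecidableEq n]
    (A : Matrix m n ℝ) (σ : n → ℝ) [LinearOrder n] : Prop :=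
  Antitone σ ∧ (∀ j, 0 ≤ σ j) ∧
    Finset.univ.val.map (fun j => σ j ^ 2) =
      Finset.univ.val.map (show (Aᵀ * A).IsHermitian by
        simpa [Matrix.conjTranspose_eq_transpose_of_trivial] using
          Matrix.isHermitian_conjTranspose_mul_self A).eigenvalues

noncomputable def toE {m n : Type*} [Fintype m] [Fintype n] (A : Matrix m n ℝ) :
    EuclideanSpace ℝ (m × n) :=
  (WithLp.equiv 2 ((m × n) → ℝ)).symm (fun p => A p.1 p.2)

lemma frob_eq_norm {m n : Type*} [Fintype m] [Fintype n] (A : Matrix m n ℝ) :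
    frob A = ‖toE A‖ := by
  rw [EuclideanSpace.norm_eq, frob, Fintype.sum_prod_type]
  simp [toE, Real.norm_eq_abs, sq_abs]

lemma frob_sub_triangle {m n : Type*} [Fintype m] [Fintype n]
    (A B C : Matrix m n ℝ) : frob (A - C) ≤ frob (A - B) + frob (B - C) := by
  rw [frob_eq_norm, frob_eq_norm, frob_eq_norm]
  have h : toE (A - C) = toE (A - B) + toE (B - C) := by
    ext p
    simp [toE, Matrix.sub_apply, WithLp.equiv_symm_apply]
  rw [h]; exact norm_add_le _ _

lemma frob_neg_sub {m n : Type*} [Fintype m] [Fintype n]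
    (A B : Matrix m n ℝ) : frob (A - B) = frob (B - A) := by
  unfold frob; congr 1; apply Finset.sum_congr rfl; intro i _
  apply Finset.sum_congr rfl; intro j _; rw [Matrix.sub_apply, Matrix.sub_apply]; ring

lemma rank_col_submatrix_le {m n o : Type*} [Fintype m] [Fintype n] [Fintype o] [DecidableEq m]
    (A : Matrix m n ℝ) (g : o → n) :
    (Matrix.of fun j k => A j (g k) : Matrix m o ℝ).rank ≤ A.rank := by
  rw [Matrix.rank_eq_finrank_span_cols, Matrix.rank_eq_finrank_span_cols]
  apply Submodule.finrank_mono
  apply Submodule.span_mono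
  rintro _ ⟨k, rfl⟩
  exact ⟨g k, rfl⟩

lemma sumSq_sigma {d M : ℕ} {n : Fin M → ℕ}
    (A : Matrix (Fin d) ((i : Fin M) × Fin (n i)) ℝ) :
    (∑ j, ∑ p, (A j p) ^ 2) = ∑ i, ∑ j, ∑ k, (A j ⟨i, k⟩) ^ 2 := by
  rw [Finset.sum_comm]
  rw [← Finset.univ_sigma_univ, Finset.sum_sigma]
  · apply Finset.sum_congr rfl
    intro i _
    exact Finset.sum_comm

lemma frob_le_of_sumSq_le {m n : Type*} [Fintype m] [Fintype n]
    (A B : Matrix m n ℝ) (h : (∑ i, ∑ j, (A i j) ^ 2) ≤ ∑ i, ∑ j, (B i j) ^ 2) :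
    frob A ≤ frob B := Real.sqrt_le_sqrt h

lemma sumSq_le_of_frob_le {m n : Type*} [Fintype m] [Fintype n]
    (A B : Matrix m n ℝ) (h : frob A ≤ frob B) :
    (∑ i, ∑ j, (A i j) ^ 2) ≤ ∑ i, ∑ j, (B i j) ^ 2 := by
  have hA : (0:ℝ) ≤ ∑ i, ∑ j, (A i j) ^ 2 :=
    Finset.sum_nonneg fun i _ => Finset.sum_nonneg fun j _ => sq_nonneg _
  have hB : (0:ℝ) ≤ ∑ i, ∑ j, (B i j) ^ 2 :=
    Finset.sum_nonneg fun i _ => Finset.sum_nonneg fun j _ => sq_nonneg _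
  have := pow_le_pow_left₀ (Real.sqrt_nonneg _) h 2
  simp only [frob] at this
  rwa [Real.sq_sqrt hA, Real.sq_sqrt hB] at this

/-- with `Z = [(Y¹)_r | ⋯ | (Yᴹ)_r]` blockwise best rank-`r`
approximations, `‖Z_r − Y‖_F ≤ ‖Z_r − Z‖_F + ‖Z − Y‖_F ≤ 3 ‖Y_r − Y‖_F`. -/
theorem stmt_8 {d M : ℕ} {n : Fin M → ℕ} (r : ℕ)
    (Y Z Yr Zr : Matrix (Fin d) ((i : Fin M) × Fin (n i)) ℝ)
    (Yb Zb : ∀ i : Fin M, Matrix (Fin d) (Fin (n i)) ℝ)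
    (hYb : ∀ i, Yb i = Matrix.of fun j k => Y j ⟨i, k⟩)
    (hZb : ∀ i, Zb i = Matrix.of fun j k => Z j ⟨i, k⟩)
    (hblocks : ∀ i, IsBestRankApprox r (Zb i) (Yb i))
    (hYr : IsBestRankApprox r Yr Y)
    (hZr : IsBestRankApprox r Zr Z) :
    frob (Zr - Y) ≤ frob (Zr - Z) + frob (Z - Y) ∧
    frob (Zr - Z) + frob (Z - Y) ≤ 3 * frob (Yr - Y) := by
  have h3 : frob (Z - Y) ≤ frob (Yr - Y) := by
    set Yrb : ∀ i : Fin M, Matrix (Fin d) (Fin (n i)) ℝ :=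
      fun i => Matrix.of fun j k => Yr j ⟨i, k⟩ with hYrb
    apply frob_le_of_sumSq_le
    rw [sumSq_sigma, sumSq_sigma]
    apply Finset.sum_le_sum
    intro i _
    have hrank : (Yrb i).rank ≤ r :=
      le_trans (rank_col_submatrix_le Yr (fun k => (⟨i, k⟩ : (i : Fin M) × Fin (n i)))) hYr.1
    have hf : frob (Zb i - Yb i) ≤ frob (Yrb i - Yb i) := (hblocks i).2 _ hrank
    have hs := sumSq_le_of_frob_le _ _ hf
    have e1 : ∀ j k, (Z - Y) j ⟨i, k⟩ = (Zb i - Yb i) j k := by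
      intro j k; rw [hZb, hYb]; simp [Matrix.sub_apply]
    have e2 : ∀ j k, (Yr - Y) j ⟨i, k⟩ = (Yrb i - Yb i) j k := by
      intro j k; rw [hYb]; simp [hYrb, Matrix.sub_apply]
    simp only [e1, e2]
    exact hs
  refine ⟨frob_sub_triangle Zr Z Y, ?_⟩
  have h1 : frob (Zr - Z) ≤ frob (Yr - Z) := hZr.2 Yr hYr.1
  have h2 : frob (Yr - Z) ≤ frob (Yr - Y) + frob (Y - Z) := frob_sub_triangle Yr Y Z
  have h4 : frob (Y - Z) = frob (Z - Y) := frob_neg_sub Y Z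
  linarith
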